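/- Let Ψ be the finite-horizon LTV filter x'(t)=A(t)x(t)+B(t)d(t), e(t)=C(t)x(t)+D(t)d(t) on [0,T] with continuous coefficients, D(t) of full column rank for all t, and let M:[0,T]→S^{n_e} be continuous with M(t) positive definite for all t. Set Q:=CᵀMC, S:=CᵀMD, R:=DᵀMD, let X:[0,T]→S^{n_x} be a continuously differentiable solution of X'+AᵀX+XA+Q−(XB+S)R⁻¹(XB+S)ᵀ=0 with X(T)=0, and let W:[0,T]→ℝ^{n_d×n_d} be continuous with WᵀW=R. Define the square spectral factor U by the output ẽ(t):=W(t)⁻ᵀ(B(t)ᵀX(t)+S(t)ᵀ)x(t)+W(t)d(t) (same state x and input d as Ψ). Then for every continuous input d:[0,T]→ℝ^{n_d} and the trajectory with x(0)=0, the time-domain factorization identity ∫₀ᵀ e(t)ᵀM(t)e(t) dt = ∫₀ᵀ ‖ẽ(t)‖² dt holds (i.e., Ψ~MΨ = U~U as quadratic forms on inputs over [0,T]). -/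

import Mathlib

/-!
Completing the square with the Riccati equation shows that, pointwise in time,
`‖ẽ‖² = eᵀ M e + d/dt (xᵀ X x)` along every trajectory. With `K = X B + S` and `R = WᵀW`,
`‖ẽ‖² = xᵀ K R⁻¹ Kᵀ x + 2 xᵀ K d + dᵀ R d`; the Riccati equation turns `K R⁻¹ Kᵀ` into
`X' + AᵀX + XA + Q`, and what remains is `eᵀ M e` plus the derivative of the storage function
`xᵀ X x`. Integrating over `[0, T]`, the storage term contributes
`x(T)ᵀ X(T) x(T) - x(0)ᵀ X(0) x(0) = 0`.
-/

open Matrix Set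

namespace Matrix

section Algebra

variable {R : Type*} [CommRing R] {l m n : Type*} [Fintype l] [Fintype m] [Fintype n]

theorem mulVec_dotProduct_mulVec (P : Matrix l m R) (Q : Matrix l n R) (a : m → R) (b : n → R) :
    (P *ᵥ a) ⬝ᵥ (Q *ᵥ b) = a ⬝ᵥ ((Pᵀ * Q) *ᵥ b) := by
  rw [← mulVec_mulVec, dotProduct_transpose_mulVec, dotProduct_comm]

theorem add_mulVec_dotProduct_mulVec_add_self {N : Matrix l l R} (hN : Nᵀ = N)
    (P : Matrix l m R) (Q : Matrix l n R) (a : m → R) (b : n → R) :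
    (P *ᵥ a + Q *ᵥ b) ⬝ᵥ (N *ᵥ (P *ᵥ a + Q *ᵥ b)) =
      a ⬝ᵥ ((Pᵀ * N * P) *ᵥ a) + 2 * (a ⬝ᵥ ((Pᵀ * N * Q) *ᵥ b)) +
        b ⬝ᵥ ((Qᵀ * N * Q) *ᵥ b) := by
  have hcross : b ⬝ᵥ ((Qᵀ * N * P) *ᵥ a) = a ⬝ᵥ ((Pᵀ * N * Q) *ᵥ b) := by
    rw [← dotProduct_transpose_mulVec]
    simp only [transpose_mul, transpose_transpose, hN, Matrix.mul_assoc]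
  simp only [mulVec_add, dotProduct_add, add_dotProduct, mulVec_mulVec,
    mulVec_dotProduct_mulVec, Matrix.mul_assoc] at hcross ⊢
  rw [hcross]
  ring

variable [DecidableEq n]

theorem inv_transpose_mulVec_add_mulVec_dotProduct_self {W : Matrix n n R} (hW : IsUnit W.det)
    (K : Matrix m n R) (x : m → R) (d : n → R) :
    ((Wᵀ)⁻¹ *ᵥ (Kᵀ *ᵥ x) + W *ᵥ d) ⬝ᵥ ((Wᵀ)⁻¹ *ᵥ (Kᵀ *ᵥ x) + W *ᵥ d) =
      x ⬝ᵥ ((K * (Wᵀ * W)⁻¹ * Kᵀ) *ᵥ x) + 2 * (x ⬝ᵥ (K *ᵥ d)) + d ⬝ᵥ ((Wᵀ * W) *ᵥ d) := by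
  have hF : (Wᵀ)⁻¹ *ᵥ (Kᵀ *ᵥ x) = (K * W⁻¹)ᵀ *ᵥ x := by
    rw [mulVec_mulVec, transpose_mul, transpose_nonsing_inv]
  have hFF : K * W⁻¹ * (K * W⁻¹)ᵀ = K * (Wᵀ * W)⁻¹ * Kᵀ := by
    rw [transpose_mul, transpose_nonsing_inv, mul_inv_rev]
    simp only [Matrix.mul_assoc]
  have hFW : K * W⁻¹ * W = K := by
    rw [Matrix.mul_assoc, nonsing_inv_mul W hW, Matrix.mul_one]
  simpa only [hF, one_mulVec, transpose_transpose, Matrix.mul_one, hFF, hFW] using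
    add_mulVec_dotProduct_mulVec_add_self (transpose_one : (1 : Matrix n n R)ᵀ = 1)
      (K * W⁻¹)ᵀ W x d

theorem riccati_spectralFactor_output_sq {A X X' : Matrix m m R} {B : Matrix m n R}
    {C : Matrix l m R} {D : Matrix l n R} {M : Matrix l l R} {W : Matrix n n R} (hM : Mᵀ = M) (hX : Xᵀ = X) (hW : IsUnit W.det)
    (hWR : Wᵀ * W = Dᵀ * M * D)
    (hRDE : X' + Aᵀ * X + X * A + Cᵀ * M * C -
      (X * B + Cᵀ * M * D) * (Dᵀ * M * D)⁻¹ * (X * B + Cᵀ * M * D)ᵀ = 0)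
    (x : m → R) (d : n → R) :
    ((Wᵀ)⁻¹ *ᵥ ((Bᵀ * X + (Cᵀ * M * D)ᵀ) *ᵥ x) + W *ᵥ d) ⬝ᵥ
        ((Wᵀ)⁻¹ *ᵥ ((Bᵀ * X + (Cᵀ * M * D)ᵀ) *ᵥ x) + W *ᵥ d) =
      (C *ᵥ x + D *ᵥ d) ⬝ᵥ (M *ᵥ (C *ᵥ x + D *ᵥ d)) +
        (x ⬝ᵥ ((X' + Aᵀ * X + X * A) *ᵥ x) + 2 * (x ⬝ᵥ ((X * B) *ᵥ d))) := by
  have hKT : Bᵀ * X + (Cᵀ * M * D)ᵀ = (X * B + Cᵀ * M * D)ᵀ := by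
    rw [transpose_add, transpose_mul X B, hX]
  have hRic : X' + Aᵀ * X + X * A =
      (X * B + Cᵀ * M * D) * (Dᵀ * M * D)⁻¹ * (X * B + Cᵀ * M * D)ᵀ - Cᵀ * M * C :=
    eq_sub_of_add_eq (sub_eq_zero.1 hRDE)
  rw [hKT, inv_transpose_mulVec_add_mulVec_dotProduct_self hW, hWR,
    add_mulVec_dotProduct_mulVec_add_self hM, hRic]
  simp only [sub_mulVec, add_mulVec, dotProduct_sub, dotProduct_add]
  ring

end Algebra

theorem isUnit_det_of_transpose_mul_self_eq {K : Type*} [Field K] [Preorder K]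
    {n p : Type*} [Fintype n] [DecidableEq n] [Fintype p]
    {W : Matrix n n K} {D : Matrix p n K} {M : Matrix p p K}
    (hD : ∀ v, D *ᵥ v = 0 → v = 0) (hM : ∀ v, v ≠ 0 → 0 < v ⬝ᵥ (M *ᵥ v))
    (hW : Wᵀ * W = Dᵀ * M * D) : IsUnit W.det := by
  refine isUnit_iff_ne_zero.2 fun hdet => ?_
  obtain ⟨v, hv, hWv⟩ := exists_mulVec_eq_zero_iff.2 hdet
  have hDv : D *ᵥ v ≠ 0 := fun h => hv (hD v h)
  have hquad : (D *ᵥ v) ⬝ᵥ (M *ᵥ (D *ᵥ v)) = (W *ᵥ v) ⬝ᵥ (W *ᵥ v) := by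
    rw [mulVec_mulVec, mulVec_dotProduct_mulVec, mulVec_dotProduct_mulVec, hW, Matrix.mul_assoc]
  have hpos := hM _ hDv
  rw [hquad, hWv, zero_dotProduct] at hpos
  exact lt_irrefl _ hpos

end Matrix

section Calculus

variable {𝕜 : Type*} [NontriviallyNormedField 𝕜] {m n : Type*} [Fintype n] {t : 𝕜}

theorem HasDerivAt.dotProduct {u v : 𝕜 → n → 𝕜} {u' v' : n → 𝕜} (hu : HasDerivAt u u' t)
    (hv : HasDerivAt v v' t) : HasDerivAt (fun s => u s ⬝ᵥ v s) (u' ⬝ᵥ v t + u t ⬝ᵥ v') t :=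
  (HasDerivAt.fun_sum fun i _ => (hasDerivAt_pi.1 hu i).fun_mul (hasDerivAt_pi.1 hv i)).congr_deriv
    Finset.sum_add_distrib

theorem HasDerivAt.matrix_mulVec {P : 𝕜 → Matrix m n 𝕜} {P' : Matrix m n 𝕜} {v : 𝕜 → n → 𝕜}
    {v' : n → 𝕜} (hP : ∀ i j, HasDerivAt (fun s => P s i j) (P' i j) t)
    (hv : HasDerivAt v v' t) : HasDerivAt (fun s => P s *ᵥ v s) (P' *ᵥ v t + P t *ᵥ v') t :=
  hasDerivAt_pi.2 fun i => (hasDerivAt_pi.2 (hP i)).dotProduct hv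

theorem hasDerivAt_dotProduct_mulVec_self_of_linear [Fintype m] {x : 𝕜 → m → 𝕜}
    {X : 𝕜 → Matrix m m 𝕜} {A X' : Matrix m m 𝕜} {B : Matrix m n 𝕜} {d : n → 𝕜}
    (hx : HasDerivAt x (A *ᵥ x t + B *ᵥ d) t)
    (hX : ∀ i j, HasDerivAt (fun s => X s i j) (X' i j) t) (hXsymm : (X t)ᵀ = X t) :
    HasDerivAt (fun s => x s ⬝ᵥ (X s *ᵥ x s))
      (x t ⬝ᵥ ((X' + Aᵀ * X t + X t * A) *ᵥ x t) + 2 * (x t ⬝ᵥ ((X t * B) *ᵥ d))) t := by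
  refine (hx.dotProduct (HasDerivAt.matrix_mulVec hX hx)).congr_deriv ?_
  have hcross : (B *ᵥ d) ⬝ᵥ (X t *ᵥ x t) = x t ⬝ᵥ ((X t * B) *ᵥ d) := by
    rw [mulVec_dotProduct_mulVec, ← dotProduct_transpose_mulVec, transpose_mul, transpose_transpose,
      hXsymm]
  simp only [mulVec_add, add_mulVec, dotProduct_add, add_dotProduct, hcross, mulVec_mulVec,
    mulVec_dotProduct_mulVec]
  ring

end Calculus

section Continuity

variable {α R : Type*} [TopologicalSpace α] [TopologicalSpace R] {m n : Type*} {s : Set α}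

theorem continuousOn_matrix {P : α → Matrix m n R} (h : ∀ i j, ContinuousOn (fun a => P a i j) s) :
    ContinuousOn P s :=
  continuousOn_pi.2 fun i => continuousOn_pi.2 (h i)

variable [Fintype n]

@[fun_prop]
protected theorem ContinuousOn.dotProduct [Mul R] [AddCommMonoid R] [ContinuousAdd R]
    [ContinuousMul R] {u v : α → n → R} (hu : ContinuousOn u s) (hv : ContinuousOn v s) :
    ContinuousOn (fun a => u a ⬝ᵥ v a) s := by
  rw [continuousOn_iff_continuous_domRestrict] at *
  exact hu.dotProduct hv

@[fun_prop]
theorem ContinuousOn.matrix_mulVec [NonUnitalNonAssocSemiring R] [ContinuousAdd R]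
    [ContinuousMul R] {P : α → Matrix m n R} {v : α → n → R} (hP : ContinuousOn P s)
    (hv : ContinuousOn v s) : ContinuousOn (fun a => P a *ᵥ v a) s := by
  rw [continuousOn_iff_continuous_domRestrict] at *
  exact hP.matrix_mulVec hv

end Continuity

theorem finite_horizon_factorization_identity_general
    {nx nd ne : ℕ} {T : ℝ} (hT : 0 < T)
    (A : ℝ → Matrix (Fin nx) (Fin nx) ℝ)
    (B : ℝ → Matrix (Fin nx) (Fin nd) ℝ)
    (C : ℝ → Matrix (Fin ne) (Fin nx) ℝ)
    (D : ℝ → Matrix (Fin ne) (Fin nd) ℝ)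
    (hA : ∀ i j, ContinuousOn (fun t => A t i j) (Icc 0 T))
    (hB : ∀ i j, ContinuousOn (fun t => B t i j) (Icc 0 T))
    (hC : ∀ i j, ContinuousOn (fun t => C t i j) (Icc 0 T))
    (hD : ∀ i j, ContinuousOn (fun t => D t i j) (Icc 0 T))
    -- D(t) has full column rank
    (hDrank : ∀ t ∈ Icc (0:ℝ) T, ∀ v : Fin nd → ℝ, D t *ᵥ v = 0 → v = 0)
    (M : ℝ → Matrix (Fin ne) (Fin ne) ℝ)
    (hMcont : ∀ i j, ContinuousOn (fun t => M t i j) (Icc 0 T))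
    (hMsym : ∀ t ∈ Icc (0:ℝ) T, (M t)ᵀ = M t)
    (hMpd : ∀ t ∈ Icc (0:ℝ) T, ∀ v : Fin ne → ℝ, v ≠ 0 → 0 < v ⬝ᵥ (M t *ᵥ v))
    -- continuously differentiable symmetric solution of the factorization RDE
    (X X' : ℝ → Matrix (Fin nx) (Fin nx) ℝ)
    (hXsym : ∀ t ∈ Icc (0:ℝ) T, (X t)ᵀ = X t)
    (hXderiv : ∀ t ∈ Icc (0:ℝ) T, ∀ i j, HasDerivAt (fun s => X s i j) (X' t i j) t)
    (hX'cont : ∀ i j, ContinuousOn (fun t => X' t i j) (Icc 0 T))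
    (hXT : X T = 0)
    (hRDE : ∀ t ∈ Icc (0:ℝ) T,
      X' t + (A t)ᵀ * X t + X t * A t + (C t)ᵀ * M t * C t -
        (X t * B t + (C t)ᵀ * M t * D t) * ((D t)ᵀ * M t * D t)⁻¹ *
          (X t * B t + (C t)ᵀ * M t * D t)ᵀ = 0)
    -- square root factor W of R = DᵀMD
    (W : ℝ → Matrix (Fin nd) (Fin nd) ℝ)
    (hW : ∀ t ∈ Icc (0:ℝ) T, (W t)ᵀ * W t = (D t)ᵀ * M t * D t) :
    ∀ (d : ℝ → Fin nd → ℝ) (x : ℝ → Fin nx → ℝ),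
      (∀ i, ContinuousOn (fun t => d t i) (Icc 0 T)) →
      x 0 = 0 →
      (∀ t ∈ Icc (0:ℝ) T, ∀ i,
        HasDerivAt (fun s => x s i) ((A t *ᵥ x t + B t *ᵥ d t) i) t) →
      (∫ t in (0:ℝ)..T,
        (C t *ᵥ x t + D t *ᵥ d t) ⬝ᵥ (M t *ᵥ (C t *ᵥ x t + D t *ᵥ d t))) =
      ∫ t in (0:ℝ)..T,
        (((W t)ᵀ)⁻¹ *ᵥ (((B t)ᵀ * X t + ((C t)ᵀ * M t * D t)ᵀ) *ᵥ x t) + W t *ᵥ d t) ⬝ᵥ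
          (((W t)ᵀ)⁻¹ *ᵥ (((B t)ᵀ * X t + ((C t)ᵀ * M t * D t)ᵀ) *ᵥ x t) + W t *ᵥ d t) := by
  intro d x hd hx0 hx
  have hIcc : uIcc 0 T = Icc 0 T := uIcc_of_le hT.le
  have hx' : ∀ t ∈ Icc 0 T, HasDerivAt x (A t *ᵥ x t + B t *ᵥ d t) t :=
    fun t ht => hasDerivAt_pi.2 (hx t ht)
  have hxc : ContinuousOn x (Icc 0 T) := fun t ht => (hx' t ht).continuousAt.continuousWithinAt
  have hXc : ContinuousOn X (Icc 0 T) := continuousOn_matrix fun i j t ht =>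
    (hXderiv t ht i j).continuousAt.continuousWithinAt
  have hAc := continuousOn_matrix hA
  have hBc := continuousOn_matrix hB
  have hCc := continuousOn_matrix hC
  have hDc := continuousOn_matrix hD
  have hMc := continuousOn_matrix hMcont
  have hX'c := continuousOn_matrix hX'cont
  have hdc := continuousOn_pi.2 hd
  have hV'int : IntervalIntegrable (fun t => x t ⬝ᵥ ((X' t + (A t)ᵀ * X t + X t * A t) *ᵥ x t) +
      2 * (x t ⬝ᵥ ((X t * B t) *ᵥ d t))) MeasureTheory.volume 0 T :=
    ContinuousOn.intervalIntegrable (hIcc ▸ by fun_prop)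
  -- `x(t)ᵀ X(t) x(t)` vanishes at both ends, so its derivative integrates to zero.
  have hV'zero := intervalIntegral.integral_eq_sub_of_hasDerivAt (fun t ht =>
    hasDerivAt_dotProduct_mulVec_self_of_linear (hx' t (hIcc ▸ ht)) (hXderiv t (hIcc ▸ ht))
      (hXsym t (hIcc ▸ ht))) hV'int
  rw [hXT, hx0] at hV'zero
  simp only [zero_mulVec, dotProduct_zero, zero_dotProduct, sub_zero] at hV'zero
  calc _ = (∫ t in (0:ℝ)..T,
        (C t *ᵥ x t + D t *ᵥ d t) ⬝ᵥ (M t *ᵥ (C t *ᵥ x t + D t *ᵥ d t))) +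
        ∫ t in (0:ℝ)..T, (x t ⬝ᵥ ((X' t + (A t)ᵀ * X t + X t * A t) *ᵥ x t) +
          2 * (x t ⬝ᵥ ((X t * B t) *ᵥ d t))) := by rw [hV'zero, add_zero]
    _ = _ := by
      rw [← intervalIntegral.integral_add (ContinuousOn.intervalIntegrable (hIcc ▸ by fun_prop))
        hV'int]
      refine intervalIntegral.integral_congr fun t ht => ?_
      rw [hIcc] at ht
      exact (riccati_spectralFactor_output_sq (hMsym t ht) (hXsym t ht)
        (isUnit_det_of_transpose_mul_self_eq (hDrank t ht) (hMpd t ht) (hW t ht)) (hW t ht)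
        (hRDE t ht) (x t) (d t)).symm

/-- the finite-horizon spectral factorization identity `Ψ~MΨ = U~U`
as quadratic forms on inputs: for zero initial state and the Riccati solution `X`
with `X(T) = 0`, `∫₀ᵀ eᵀMe dt = ∫₀ᵀ ‖ẽ‖² dt` where `e` is the filter output and
`ẽ = W⁻ᵀ(BᵀX + Sᵀ)x + Wd` is the square spectral-factor output. -/
theorem finite_horizon_factorization_identity
    {nx nd ne : ℕ} {T : ℝ} (hT : 0 < T)
    (A : ℝ → Matrix (Fin nx) (Fin nx) ℝ)
    (B : ℝ → Matrix (Fin nx) (Fin nd) ℝ)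
    (C : ℝ → Matrix (Fin ne) (Fin nx) ℝ)
    (D : ℝ → Matrix (Fin ne) (Fin nd) ℝ)
    (hA : ∀ i j, ContinuousOn (fun t => A t i j) (Icc 0 T))
    (hB : ∀ i j, ContinuousOn (fun t => B t i j) (Icc 0 T))
    (hC : ∀ i j, ContinuousOn (fun t => C t i j) (Icc 0 T))
    (hD : ∀ i j, ContinuousOn (fun t => D t i j) (Icc 0 T))
    -- D(t) has full column rank
    (hDrank : ∀ t ∈ Icc (0:ℝ) T, ∀ v : Fin nd → ℝ, D t *ᵥ v = 0 → v = 0)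
    (M : ℝ → Matrix (Fin ne) (Fin ne) ℝ)
    (hMcont : ∀ i j, ContinuousOn (fun t => M t i j) (Icc 0 T))
    (hMsym : ∀ t ∈ Icc (0:ℝ) T, (M t)ᵀ = M t)
    (hMpd : ∀ t ∈ Icc (0:ℝ) T, ∀ v : Fin ne → ℝ, v ≠ 0 → 0 < v ⬝ᵥ (M t *ᵥ v))
    -- continuously differentiable symmetric solution of the factorization RDE
    (X X' : ℝ → Matrix (Fin nx) (Fin nx) ℝ)
    (hXsym : ∀ t ∈ Icc (0:ℝ) T, (X t)ᵀ = X t)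
    (hXderiv : ∀ t ∈ Icc (0:ℝ) T, ∀ i j, HasDerivAt (fun s => X s i j) (X' t i j) t)
    (hX'cont : ∀ i j, ContinuousOn (fun t => X' t i j) (Icc 0 T))
    (hXT : X T = 0)
    (hRDE : ∀ t ∈ Icc (0:ℝ) T,
      X' t + (A t)ᵀ * X t + X t * A t + (C t)ᵀ * M t * C t -
        (X t * B t + (C t)ᵀ * M t * D t) * ((D t)ᵀ * M t * D t)⁻¹ *
          (X t * B t + (C t)ᵀ * M t * D t)ᵀ = 0)
    -- square root factor W of R = DᵀMD
    (W : ℝ → Matrix (Fin nd) (Fin nd) ℝ)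
    (hWcont : ∀ i j, ContinuousOn (fun t => W t i j) (Icc 0 T))
    (hW : ∀ t ∈ Icc (0:ℝ) T, (W t)ᵀ * W t = (D t)ᵀ * M t * D t) :
    ∀ (d : ℝ → Fin nd → ℝ) (x : ℝ → Fin nx → ℝ),
      (∀ i, ContinuousOn (fun t => d t i) (Icc 0 T)) →
      x 0 = 0 →
      (∀ t ∈ Icc (0:ℝ) T, ∀ i,
        HasDerivAt (fun s => x s i) ((A t *ᵥ x t + B t *ᵥ d t) i) t) →
      (∫ t in (0:ℝ)..T,
        (C t *ᵥ x t + D t *ᵥ d t) ⬝ᵥ (M t *ᵥ (C t *ᵥ x t + D t *ᵥ d t))) =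
      ∫ t in (0:ℝ)..T,
        (((W t)ᵀ)⁻¹ *ᵥ (((B t)ᵀ * X t + ((C t)ᵀ * M t * D t)ᵀ) *ᵥ x t) + W t *ᵥ d t) ⬝ᵥ
          (((W t)ᵀ)⁻¹ *ᵥ (((B t)ᵀ * X t + ((C t)ᵀ * M t * D t)ᵀ) *ᵥ x t) + W t *ᵥ d t) :=
  finite_horizon_factorization_identity_general hT A B C D hA hB hC hD hDrank M hMcont hMsym hMpd X
    X' hXsym hXderiv hX'cont hXT hRDE W hW
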